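/- For every real x with 0 < x < 1, β₁(1/x) - β₂(1/x) = 2x² ∑_{n≥1} (1/(n+x) - 1/(n+2x)) > 0; in particular β₁(ℓ) > β₂(ℓ) for every integer ℓ ≥ 2. -/

import Mathlib

/-- The digamma function `ψ(x) = Γ'(x)/Γ(x)`. -/
noncomputable def digamma (x : ℝ) : ℝ := deriv Real.Gamma x / Real.Gamma x

/-- `g₂(x) = 3/2 - γ - ψ(x+1) - 2x(ψ(2x) - ψ(x))`. -/
noncomputable def g2 (x : ℝ) : ℝ :=
  3 / 2 - Real.eulerMascheroniConstant - digamma (x + 1)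
    - 2 * x * (digamma (2 * x) - digamma x)

/-- `g₃(x) = 2 - γ - ψ(x+1) + (x/2)(5-3x)ψ(x) - x(1-6x)ψ(2x) - (3x/2)(1+3x)ψ(3x)`. -/
noncomputable def g3 (x : ℝ) : ℝ :=
  2 - Real.eulerMascheroniConstant - digamma (x + 1)
    + x / 2 * (5 - 3 * x) * digamma x
    - x * (1 - 6 * x) * digamma (2 * x)
    - 3 * x / 2 * (1 + 3 * x) * digamma (3 * x)

/-- `β₁(ℓ) = (1/ℓ)(-γ - ψ(1/ℓ))`. -/
noncomputable def beta1 (l : ℝ) : ℝ :=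
  1 / l * (-Real.eulerMascheroniConstant - digamma (1 / l))

/-- `β₂(ℓ) = (1/ℓ)[1 - γ - (1 - 2/ℓ)ψ(1/ℓ) - (2/ℓ)ψ(2/ℓ)]`. -/
noncomputable def beta2 (l : ℝ) : ℝ :=
  1 / l * (1 - Real.eulerMascheroniConstant - (1 - 2 / l) * digamma (1 / l)
    - 2 / l * digamma (2 / l))

/-- `β₃(ℓ) = (1/ℓ)[3/2 - γ - (1 - 3/(2ℓ))(1 - 1/ℓ)ψ(1/ℓ) - (1/ℓ)(1 - 6/ℓ)ψ(2/ℓ)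
  - (3/(2ℓ))(1 + 3/ℓ)ψ(3/ℓ)]`. -/
noncomputable def beta3 (l : ℝ) : ℝ :=
  1 / l * (3 / 2 - Real.eulerMascheroniConstant
    - (1 - 3 / (2 * l)) * (1 - 1 / l) * digamma (1 / l)
    - 1 / l * (1 - 6 / l) * digamma (2 / l)
    - 3 / (2 * l) * (1 + 3 / l) * digamma (3 / l))


/-!
Directly from the definitions, `β₁(1/x) - β₂(1/x) = x (2x (ψ(2x) - ψ(x)) - 1)`. Telescoping the
recurrence `ψ(y + 1) = ψ(y) + 1/y` gives `ψ(b) - ψ(a) = ∑ₙ (1/(a + n) - 1/(b + n))`, provided the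
tail `ψ(b + N) - ψ(a + N)` tends to `0`; this holds because `ψ` is monotone on `(0, ∞)` (`log ∘ Γ`
is convex, Bohr–Mollerup), which squeezes the tail between `0` and `ψ(a + N + ⌈b - a⌉) - ψ(a + N)`,
a sum of `⌈b - a⌉` reciprocals tending to `0`. The series in the statement is this one with its
first term `1/x - 1/(2x)` removed, and its terms are positive.
-/

open Real Set Filter Topology Finset

lemma differentiableAt_Gamma_of_pos {x : ℝ} (hx : 0 < x) : DifferentiableAt ℝ Gamma x :=
  differentiableAt_Gamma fun m => ((neg_nonpos.2 m.cast_nonneg).trans_lt hx).ne'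

lemma differentiableAt_log_Gamma {x : ℝ} (hx : 0 < x) : DifferentiableAt ℝ (log ∘ Gamma) x :=
  (differentiableAt_Gamma_of_pos hx).log (Gamma_pos_of_pos hx).ne'

lemma digamma_eq_deriv_log_Gamma {x : ℝ} (hx : 0 < x) : digamma x = deriv (log ∘ Gamma) x := by
  rw [digamma, Function.comp_def,
    deriv.log (differentiableAt_Gamma_of_pos hx) (Gamma_pos_of_pos hx).ne']

lemma digamma_add_one {x : ℝ} (hx : 0 < x) : digamma (x + 1) = digamma x + 1 / x := by
  rw [digamma_eq_deriv_log_Gamma (by positivity), digamma_eq_deriv_log_Gamma hx,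
    ← deriv_comp_add_const, one_div, ← deriv_log,
    ← deriv_fun_add (differentiableAt_log_Gamma hx) (differentiableAt_log hx.ne')]
  apply EventuallyEq.deriv_eq
  filter_upwards [eventually_gt_nhds hx] with y hy
  simp only [Function.comp_apply, Gamma_add_one hy.ne',
    log_mul hy.ne' (Gamma_pos_of_pos hy).ne', add_comm]

lemma digamma_add_nat {x : ℝ} (hx : 0 < x) (n : ℕ) :
    digamma (x + n) = digamma x + ∑ k ∈ range n, 1 / (x + k) := by
  induction n with
  | zero => simp
  | succ n ih =>
    rw [Nat.cast_succ, ← add_assoc, digamma_add_one (by positivity), ih, sum_range_succ, add_assoc]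

lemma monotoneOn_digamma : MonotoneOn digamma (Ioi 0) :=
  (convexOn_log_Gamma.monotoneOn_deriv fun _ hx => differentiableAt_log_Gamma hx).congr
    fun _ hx => (digamma_eq_deriv_log_Gamma hx).symm

lemma tendsto_digamma_add_nat_sub {a b : ℝ} (ha : 0 < a) (hab : a ≤ b) :
    Tendsto (fun n : ℕ => digamma (b + n) - digamma (a + n)) atTop (𝓝 0) := by
  have hb : 0 < b := ha.trans_le hab
  set c := ⌈b - a⌉₊
  have hnonneg (n : ℕ) : 0 ≤ digamma (b + n) - digamma (a + n) :=
    sub_nonneg.2 <| monotoneOn_digamma (mem_Ioi.2 (by positivity)) (mem_Ioi.2 (by positivity))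
      (by linarith)
  have hbound (n : ℕ) : digamma (b + n) - digamma (a + n) ≤ ∑ k ∈ range c, 1 / (a + n + k) := by
    have h := monotoneOn_digamma (a := b + n) (b := a + n + c) (mem_Ioi.2 (by positivity))
      (mem_Ioi.2 (by positivity))
      (by linarith [Nat.le_ceil (b - a)])
    rw [digamma_add_nat (by positivity) c] at h
    linarith
  have hterm (k : ℕ) : Tendsto (fun n : ℕ => 1 / (a + n + k)) atTop (𝓝 0) :=
    tendsto_const_nhds.div_atTop <| tendsto_atTop_add_const_right _ _ <|
      tendsto_atTop_add_const_left _ a tendsto_natCast_atTop_atTop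
  have hlim : Tendsto (fun n : ℕ => ∑ k ∈ range c, 1 / (a + n + k)) atTop (𝓝 0) := by
    simpa using tendsto_finsetSum (range c) fun k _ => hterm k
  exact squeeze_zero hnonneg hbound hlim

lemma hasSum_digamma_sub {a b : ℝ} (ha : 0 < a) (hb : 0 < b) :
    HasSum (fun n : ℕ => 1 / (a + n) - 1 / (b + n)) (digamma b - digamma a) := by
  wlog hab : a ≤ b generalizing a b
  · simpa using (this hb ha (le_of_not_ge hab)).neg
  rw [hasSum_iff_tendsto_nat_of_nonneg fun n =>
    sub_nonneg.2 (one_div_le_one_div_of_le (by positivity) (by linarith))]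
  have hpartial (N : ℕ) : ∑ n ∈ range N, (1 / (a + n) - 1 / (b + n))
      = digamma b - digamma a - (digamma (b + N) - digamma (a + N)) := by
    rw [sum_sub_distrib, digamma_add_nat ha, digamma_add_nat hb]
    ring
  simpa only [hpartial, sub_zero] using
    tendsto_const_nhds.sub (tendsto_digamma_add_nat_sub ha hab)

lemma hasSum_one_div_succ_add_sub {a b : ℝ} (ha : 0 < a) (hb : 0 < b) :
    HasSum (fun n : ℕ => 1 / ((n : ℝ) + 1 + a) - 1 / ((n : ℝ) + 1 + b))
      (digamma b - digamma a - (1 / a - 1 / b)) := by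
  have hshift : (fun n : ℕ => 1 / ((n : ℝ) + 1 + a) - 1 / ((n : ℝ) + 1 + b))
      = fun n => 1 / (a + ((n + 1 : ℕ) : ℝ)) - 1 / (b + ((n + 1 : ℕ) : ℝ)) := by
    funext n
    push_cast
    ring
  rw [hshift]
  simpa using (hasSum_nat_add_iff' 1).2 (hasSum_digamma_sub ha hb)

lemma beta1_sub_beta2_one_div (x : ℝ) :
    beta1 (1 / x) - beta2 (1 / x) = x * (2 * x * (digamma (2 * x) - digamma x) - 1) := by
  simp only [beta1, beta2, div_div_eq_mul_div, div_one, one_mul]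
  ring

lemma tsum_one_div_succ_add_sub_pos {a b : ℝ} (ha : 0 < a) (hab : a < b) :
    0 < ∑' n : ℕ, (1 / ((n : ℝ) + 1 + a) - 1 / ((n : ℝ) + 1 + b)) :=
  (hasSum_one_div_succ_add_sub ha (ha.trans hab)).summable.tsum_pos
    (fun _ => sub_nonneg.2 (one_div_le_one_div_of_le (by positivity) (by linarith))) 0
    (sub_pos.2 (one_div_lt_one_div_of_lt (by positivity) (by linarith)))

lemma beta1_sub_beta2_one_div_eq_tsum {x : ℝ} (hx : 0 < x) :
    beta1 (1 / x) - beta2 (1 / x) =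
      2 * x ^ 2 * ∑' n : ℕ, (1 / ((n : ℝ) + 1 + x) - 1 / ((n : ℝ) + 1 + 2 * x)) := by
  rw [beta1_sub_beta2_one_div, (hasSum_one_div_succ_add_sub hx (by positivity)).tsum_eq]
  field_simp
  ring

theorem beta1_sub_beta2 :
    (∀ x : ℝ, 0 < x → x < 1 →
      beta1 (1 / x) - beta2 (1 / x) =
        2 * x ^ 2 * ∑' n : ℕ, (1 / ((n : ℝ) + 1 + x) - 1 / ((n : ℝ) + 1 + 2 * x)) ∧
      0 < beta1 (1 / x) - beta2 (1 / x)) ∧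
    ∀ ℓ : ℕ, 2 ≤ ℓ → beta2 (ℓ : ℝ) < beta1 (ℓ : ℝ) := by
  have hpos {x : ℝ} (hx : 0 < x) : 0 < beta1 (1 / x) - beta2 (1 / x) := by
    rw [beta1_sub_beta2_one_div_eq_tsum hx]
    exact mul_pos (by positivity) (tsum_one_div_succ_add_sub_pos hx (by linarith))
  refine ⟨fun x hx _ => ⟨beta1_sub_beta2_one_div_eq_tsum hx, hpos hx⟩, fun ℓ hℓ => ?_⟩
  have hℓ_pos : (0 : ℝ) < ℓ := Nat.cast_pos.2 (by omega)
  simpa [one_div_one_div] using hpos (one_div_pos.2 hℓ_pos)
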